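/- There is no homogeneous noncommutative polynomial of odd degree that is purely subharmonic: if p is homogeneous of odd degree and Lap[p, h](X, H) is positive semidefinite for all tuples of real symmetric matrices X = (X_1,...,X_g) and all symmetric H of every size n, then Lap[p, h] evaluates to 0 on all such tuples. -/

import Mathlib

noncomputable section

/-- Variables: `some i` is `xᵢ`, `none` is the direction variable `h`. -/
abbrev Var (g : ℕ) := Option (Fin g)

/-- Noncommutative polynomials `ℝ⟨x₁,…,x_g,h⟩`. -/
abbrev NC (g : ℕ) := MonoidAlgebra ℝ (FreeMonoid (Var g))

/-- The monomial corresponding to a word. -/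
def mono (g : ℕ) (w : List (Var g)) : NC g :=
  MonoidAlgebra.of ℝ (FreeMonoid (Var g)) (FreeMonoid.ofList w)

/-- The generator `xᵢ`. -/
def Xv (g : ℕ) (i : Fin g) : NC g := mono g [some i]

/-- The direction variable `h`. -/
def Hv (g : ℕ) : NC g := mono g [none]

/-- Directional derivative of a word in `xᵢ` in direction `h`: sum of the
terms obtained by replacing one occurrence of `xᵢ` by `h`. -/
def wordD (g : ℕ) (i : Fin g) : List (Var g) → NC g
  | [] => 0
  | a :: w =>
      (if a = some i then mono g (none :: w) else 0) + mono g [a] * wordD g i w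

/-- Directional derivative `D[p, xᵢ, h]`, extended linearly from words. -/
def D (g : ℕ) (i : Fin g) (p : NC g) : NC g :=
  Finsupp.sum p.coeff fun w c => c • wordD g i (FreeMonoid.toList w)

/-- The noncommutative Laplacian `Lap[p,h] := ∑ᵢ D[D[p,xᵢ,h],xᵢ,h]`. -/
def Lap (g : ℕ) (p : NC g) : NC g := ∑ i : Fin g, D g i (D g i p)

/-- The transpose: linear anti-automorphism reversing words and fixing generators. -/
def transp (g : ℕ) (p : NC g) : NC g :=
  MonoidAlgebra.mapDomain (fun w => FreeMonoid.ofList (FreeMonoid.toList w).reverse) p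

/-- Evaluation of a polynomial at a tuple of matrices (one for each variable). -/
def eval (g n : ℕ) (M : Var g → Matrix (Fin n) (Fin n) ℝ) (p : NC g) :
    Matrix (Fin n) (Fin n) ℝ :=
  Finsupp.sum p.coeff fun w c => c • ((FreeMonoid.toList w).map M).prod

/-- `p` is a polynomial in `x₁,…,x_g` only (the variable `h` does not occur). -/
def NoH (g : ℕ) (p : NC g) : Prop :=
  ∀ w ∈ p.coeff.support, none ∉ FreeMonoid.toList w

/-- `p` is a homogeneous polynomial of degree `d` in the variables `x₁,…,x_g`. -/
def HomogX (g : ℕ) (d : ℕ) (p : NC g) : Prop :=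
  ∀ w ∈ p.coeff.support, none ∉ FreeMonoid.toList w ∧ (FreeMonoid.toList w).length = d

/-!
Every directional derivative `D[·, xᵢ, h]` replaces one letter of a word by another, so
`Lap[p, h]` is homogeneous of the same degree `d` as `p` in all the variables `x, h` jointly.
Evaluating it at `(-X, -H)` therefore multiplies it by `(-1)^d = -1`, and matrix positivity at
both `(X, H)` and `(-X, -H)` makes `±Lap[p, h](X, H)` positive semidefinite, hence zero.
-/

open scoped MatrixOrder ComplexOrder in
theorem Matrix.PosSemidef.eq_zero_of_posSemidef_neg {n 𝕜 : Type*} [Fintype n] [RCLike 𝕜]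
    {A : Matrix n n 𝕜} (hA : A.PosSemidef) (hnegA : (-A).PosSemidef) : A = 0 :=
  le_antisymm (neg_nonneg.mp hnegA.nonneg) hA.nonneg

def homogeneous (g d : ℕ) : Submodule ℝ (NC g) :=
  MonoidAlgebra.supported ℝ ℝ {w | w.length = d}

theorem HomogX.mem_homogeneous {g d : ℕ} {p : NC g} (hp : HomogX g d p) :
    p ∈ homogeneous g d :=
  fun w hw => (hp w hw).2

theorem mul_mem_homogeneous {g d e : ℕ} {p q : NC g} (hp : p ∈ homogeneous g d)
    (hq : q ∈ homogeneous g e) : p * q ∈ homogeneous g (d + e) := by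
  classical
  intro w hw
  obtain ⟨u, hu, v, hv, rfl⟩ :=
    Finset.mem_mul.mp (MonoidAlgebra.support_coeff_mul_subset p q hw)
  change (u * v).length = d + e
  rw [FreeMonoid.length_mul, hp hu, hq hv]

theorem mono_mem_homogeneous (g : ℕ) (w : List (Var g)) :
    mono g w ∈ homogeneous g w.length := by
  intro u hu
  rw [Finset.mem_singleton.mp (Finsupp.support_single_subset hu)]
  rfl

theorem wordD_mem_homogeneous (g : ℕ) (i : Fin g) (w : List (Var g)) :
    wordD g i w ∈ homogeneous g w.length := by
  induction w with
  | nil => exact Submodule.zero_mem _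
  | cons a w ih =>
    refine Submodule.add_mem _ ?_ ?_
    · split_ifs
      · exact mono_mem_homogeneous g (none :: w)
      · exact Submodule.zero_mem _
    · rw [List.length_cons, add_comm]
      exact mul_mem_homogeneous (mono_mem_homogeneous g [a]) ih

theorem D_mem_homogeneous {g d : ℕ} (i : Fin g) {p : NC g} (hp : p ∈ homogeneous g d) :
    D g i p ∈ homogeneous g d :=
  Submodule.finsuppSum_mem _ _ _ _ fun w hw => Submodule.smul_mem _ _ <|
    hp (Finsupp.mem_support_iff.mpr hw) ▸ wordD_mem_homogeneous g i w.toList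

theorem Lap_mem_homogeneous {g d : ℕ} {p : NC g} (hp : p ∈ homogeneous g d) :
    Lap g p ∈ homogeneous g d :=
  Submodule.sum_mem _ fun i _ => D_mem_homogeneous i (D_mem_homogeneous i hp)

theorem eval_neg_of_mem_homogeneous {g n d : ℕ} (M : Var g → Matrix (Fin n) (Fin n) ℝ)
    {q : NC g} (hq : q ∈ homogeneous g d) :
    eval g n (-M) q = (-1) ^ d * eval g n M q := by
  rw [eval, eval, Finsupp.mul_sum]
  refine Finset.sum_congr rfl fun w hw => ?_
  dsimp only
  have hmap : w.toList.map (-M) = (w.toList.map M).map Neg.neg := by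
    simp only [List.map_map]
    rfl
  rw [hmap, List.prod_map_neg, List.length_map, mul_smul_comm,
    show w.toList.length = d from hq hw]

/-- no homogeneous polynomial of odd degree is purely subharmonic:
if its Laplacian is matrix positive, then the Laplacian evaluates to `0` on all
tuples of symmetric matrices. -/
theorem no_odd_degree_pure_subharmonic (g d : ℕ) (hodd : Odd d) (p : NC g)
    (hhom : HomogX g d p)
    (hpos : ∀ (n : ℕ) (M : Var g → Matrix (Fin n) (Fin n) ℝ),
      (∀ v, (M v).IsSymm) → (eval g n M (Lap g p)).PosSemidef) :
    ∀ (n : ℕ) (M : Var g → Matrix (Fin n) (Fin n) ℝ),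
      (∀ v, (M v).IsSymm) → eval g n M (Lap g p) = 0 := by
  intro n M hM
  have hLap : Lap g p ∈ homogeneous g d := Lap_mem_homogeneous hhom.mem_homogeneous
  have hnegM := hpos n (-M) fun v => (hM v).neg
  rw [eval_neg_of_mem_homogeneous M hLap, hodd.neg_one_pow, neg_one_mul] at hnegM
  exact (hpos n M hM).eq_zero_of_posSemidef_neg hnegM
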